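/- arXiv:2309.16914 — 3 statements merged into one kernel-verified Lean document; each statement's English description precedes it below -/
import Mathlib

section
/- Let y = (y_j^S)_{j∈U, S⊆F} be a KC-dual feasible solution and let ξ_j = Σ_{S⊆F} r_j^S · y_j^S be the cost shares induced by y. Then ξ satisfies the core property: for every group J ⊆ U and every set X ⊆ F that is feasible for J (i.e., Σ_{i∈X} a_{ij} ≥ r_j for all j ∈ J), it holds that Σ_{j∈J} ξ_j ≤ Σ_{i∈X} c_i. In particular, Σ_{j∈J} ξ_j is at most the minimum cost of any integer solution serving J. (Theorem 1 of the paper.) -/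
/-!
The proof is weak LP duality for the knapsack-cover relaxation: a set `X` feasible for `J`
satisfies every knapsack-cover inequality `∑_{i ∈ X} a_{ij}^S ≥ r_j^S` of the users in `J`,
so pairing these inequalities with `y` and exchanging the order of summation charges
`∑_{j ∈ J} ξ_j` to the dual constraints of the facilities in `X`.
-/

open Finset

/-- Residual requirement of user `j` given the set `S` of built facilities. -/
noncomputable def resReq {F U : Type*} [DecidableEq F]
    (a : F → U → ℝ) (r : U → ℝ) (S : Finset F) (j : U) : ℝ :=
  max (r j - ∑ i ∈ S, a i j) 0

/-- Residual contribution of facility `i` to user `j` given built facilities `S`. -/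
noncomputable def resCon {F U : Type*} [DecidableEq F]
    (a : F → U → ℝ) (r : U → ℝ) (S : Finset F) (i : F) (j : U) : ℝ :=
  if i ∈ S then 0 else min (a i j) (resReq a r S j)

/-- KC-dual feasibility of a family `y = (y_j^S)`. -/
noncomputable def KCDualFeasible {F U : Type*} [Fintype F] [DecidableEq F] [Fintype U]
    (a : F → U → ℝ) (r : U → ℝ) (c : F → ℝ) (y : U → Finset F → ℝ) : Prop :=
  (∀ j S, 0 ≤ y j S) ∧
    ∀ i : F, ∑ j : U, ∑ S ∈ Finset.univ.filter (fun S : Finset F => i ∉ S),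
      resCon a r S i j * y j S ≤ c i

lemma min_add_le_min_add_min {x y R : ℝ} (hx : 0 ≤ x) (hy : 0 ≤ y) (hR : 0 ≤ R) :
    min (x + y) R ≤ min x R + min y R := by
  grind

lemma min_sum_le_sum_min {ι : Type*} {s : Finset ι} {f : ι → ℝ} {R : ℝ}
    (hf : ∀ i ∈ s, 0 ≤ f i) (hR : 0 ≤ R) :
    min (∑ i ∈ s, f i) R ≤ ∑ i ∈ s, min (f i) R :=
  le_sum_of_subadditive_on_pred (fun x => min x R) (0 ≤ ·) (min_le_left 0 R)
    (fun _ _ hx hy => min_add_le_min_add_min hx hy hR) (fun _ _ => add_nonneg) f hf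

section Residual

variable {F U : Type*} [DecidableEq F] (a : F → U → ℝ) (r : U → ℝ)

lemma resReq_nonneg (S : Finset F) (j : U) : 0 ≤ resReq a r S j :=
  le_max_right _ _

lemma resCon_of_mem {S : Finset F} {i : F} (hi : i ∈ S) (j : U) : resCon a r S i j = 0 :=
  if_pos hi

lemma resCon_of_notMem {S : Finset F} {i : F} (hi : i ∉ S) (j : U) :
    resCon a r S i j = min (a i j) (resReq a r S j) :=
  if_neg hi

variable {a}

lemma resCon_nonneg (ha : ∀ i j, 0 ≤ a i j) (S : Finset F) (i : F) (j : U) :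
    0 ≤ resCon a r S i j := by
  unfold resCon
  split_ifs
  exacts [le_rfl, le_min (ha i j) (resReq_nonneg a r S j)]

lemma resReq_le_sum_sdiff (ha : ∀ i j, 0 ≤ a i j) {X : Finset F} {j : U}
    (hX : r j ≤ ∑ i ∈ X, a i j) (S : Finset F) :
    resReq a r S j ≤ ∑ i ∈ X \ S, a i j := by
  have hXS : ∑ i ∈ X ∩ S, a i j ≤ ∑ i ∈ S, a i j :=
    sum_le_sum_of_subset_of_nonneg inter_subset_right fun i _ _ => ha i j
  have hsplit := sum_inter_add_sum_sdiff X S (a · j)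
  exact max_le (by linarith) (sum_nonneg fun i _ => ha i j)

/-- Truncating contributions at `R ≥ 0` is subadditive, so it costs nothing against a residual
requirement `R` that the untruncated contributions already cover. -/
lemma resReq_le_sum_resCon (ha : ∀ i j, 0 ≤ a i j) {X : Finset F} {j : U}
    (hX : r j ≤ ∑ i ∈ X, a i j) (S : Finset F) :
    resReq a r S j ≤ ∑ i ∈ X, resCon a r S i j := by
  have hsdiff : ∑ i ∈ X \ S, resCon a r S i j = ∑ i ∈ X, resCon a r S i j :=
    sum_subset sdiff_subset fun i hiX hi =>
      resCon_of_mem a r (by simpa [hiX] using hi) j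
  calc resReq a r S j
      = min (∑ i ∈ X \ S, a i j) (resReq a r S j) :=
        (min_eq_right (resReq_le_sum_sdiff r ha hX S)).symm
    _ ≤ ∑ i ∈ X \ S, min (a i j) (resReq a r S j) :=
        min_sum_le_sum_min (fun i _ => ha i j) (resReq_nonneg a r S j)
    _ = ∑ i ∈ X, resCon a r S i j := by
        rw [← hsdiff]
        exact sum_congr rfl fun i hi => (resCon_of_notMem a r (mem_sdiff.1 hi).2 j).symm

end Residual

lemma KCDualFeasible.sum_resCon_mul_le {F U : Type*} [Fintype F] [DecidableEq F] [Fintype U]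
    {a : F → U → ℝ} {r : U → ℝ} {c : F → ℝ} {y : U → Finset F → ℝ}
    (ha : ∀ i j, 0 ≤ a i j) (hy : KCDualFeasible a r c y) (J : Finset U) (i : F) :
    ∑ j ∈ J, ∑ S : Finset F, resCon a r S i j * y j S ≤ c i := by
  have hfilter : ∀ j, ∑ S ∈ univ.filter (fun S : Finset F => i ∉ S), resCon a r S i j * y j S
      = ∑ S : Finset F, resCon a r S i j * y j S := fun j =>
    sum_filter_of_ne fun S _ hS hiS =>
      hS (by rw [resCon_of_mem a r hiS, zero_mul])
  calc ∑ j ∈ J, ∑ S : Finset F, resCon a r S i j * y j S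
      ≤ ∑ j : U, ∑ S : Finset F, resCon a r S i j * y j S :=
        sum_le_sum_of_subset_of_nonneg (subset_univ J) fun j _ _ =>
          sum_nonneg fun S _ => mul_nonneg (resCon_nonneg r ha S i j) (hy.1 j S)
    _ ≤ c i := by simpa only [hfilter] using hy.2 i

theorem kc_dual_cost_shares_core_general
    {F U : Type*} [Fintype F] [DecidableEq F] [Fintype U]
    (a : F → U → ℝ) (r : U → ℝ) (c : F → ℝ)
    (ha : ∀ i j, 0 ≤ a i j)
    (y : U → Finset F → ℝ) (hy : KCDualFeasible a r c y)
    (ξ : U → ℝ) (hξ : ∀ j, ξ j = ∑ S : Finset F, resReq a r S j * y j S) :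
    ∀ (J : Finset U) (X : Finset F),
      (∀ j ∈ J, r j ≤ ∑ i ∈ X, a i j) →
      ∑ j ∈ J, ξ j ≤ ∑ i ∈ X, c i := by
  intro J X hX
  calc ∑ j ∈ J, ξ j = ∑ j ∈ J, ∑ S : Finset F, resReq a r S j * y j S :=
        sum_congr rfl fun j _ => hξ j
    _ ≤ ∑ j ∈ J, ∑ S : Finset F, (∑ i ∈ X, resCon a r S i j) * y j S :=
        sum_le_sum fun j hj => sum_le_sum fun S _ =>
          mul_le_mul_of_nonneg_right (resReq_le_sum_resCon r ha (hX j hj) S) (hy.1 j S)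
    _ = ∑ j ∈ J, ∑ i ∈ X, ∑ S : Finset F, resCon a r S i j * y j S :=
        sum_congr rfl fun j _ => by simp only [sum_mul]; exact sum_comm
    _ = ∑ i ∈ X, ∑ j ∈ J, ∑ S : Finset F, resCon a r S i j * y j S := sum_comm
    _ ≤ ∑ i ∈ X, c i := sum_le_sum fun i _ => hy.sum_resCon_mul_le ha J i

/-- Theorem 1: cost shares induced by a KC-dual feasible solution satisfy the
core property. -/
theorem kc_dual_cost_shares_core
    {F U : Type*} [Fintype F] [DecidableEq F] [Fintype U]
    (a : F → U → ℝ) (r : U → ℝ) (c : F → ℝ)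
    (ha : ∀ i j, 0 ≤ a i j) (hc : ∀ i, 0 ≤ c i)
    (y : U → Finset F → ℝ) (hy : KCDualFeasible a r c y)
    (ξ : U → ℝ) (hξ : ∀ j, ξ j = ∑ S : Finset F, resReq a r S j * y j S) :
    ∀ (J : Finset U) (X : Finset F),
      (∀ j ∈ J, r j ≤ ∑ i ∈ X, a i j) →
      ∑ j ∈ J, ξ j ≤ ∑ i ∈ X, c i :=
  kc_dual_cost_shares_core_general a r c ha y hy ξ hξ
end

section
/- Key inequality behind the Carnes–Shmoys min-cost knapsack analysis: fix a single user j with requirement r_j and contributions a_{ij} ≥ 0. Let X ⊆ F and ℓ ∈ X be such that X \ {ℓ} is infeasible for j, i.e., Σ_{i∈X\{ℓ}} a_{ij} < r_j. Then for every S ⊆ X \ {ℓ}, the residual contributions of X satisfy Σ_{i∈X\S} a_{ij}^S ≤ 2 · r_j^S. -/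
/-!
The facility `ℓ` contributes at most the residual requirement `r^S`, as every residual
contribution is capped by it. The remaining facilities of `X \ S` contribute at most their
raw contributions, whose total is `Σ_{X \ {ℓ}} a - Σ_S a < r - Σ_S a = r^S` by infeasibility.
-/

open Finset

/-- Single-user residual requirement. -/
noncomputable def resReq1 {F : Type*} [DecidableEq F]
    (a : F → ℝ) (R : ℝ) (S : Finset F) : ℝ :=
  max (R - ∑ i ∈ S, a i) 0

/-- Single-user residual contribution. -/
noncomputable def resCon1 {F : Type*} [DecidableEq F]
    (a : F → ℝ) (R : ℝ) (S : Finset F) (i : F) : ℝ :=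
  if i ∈ S then 0 else min (a i) (resReq1 a R S)

section Residual

variable {F : Type*} [DecidableEq F] (a : F → ℝ) (R : ℝ) (S : Finset F)

lemma resReq1_eq_sub_of_sum_le (h : ∑ i ∈ S, a i ≤ R) :
    resReq1 a R S = R - ∑ i ∈ S, a i :=
  max_eq_left (sub_nonneg.2 h)

lemma resCon1_le_resReq1 (i : F) : resCon1 a R S i ≤ resReq1 a R S := by
  unfold resCon1
  split_ifs
  · exact le_max_right _ _
  · exact min_le_right _ _

lemma sum_sdiff_resCon1_le (T : Finset F) :
    ∑ i ∈ T \ S, resCon1 a R S i ≤ ∑ i ∈ T \ S, a i := by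
  refine sum_le_sum fun i hi => ?_
  rw [resCon1, if_neg (mem_sdiff.1 hi).2]
  exact min_le_left _ _

end Residual

theorem carnes_shmoys_key_inequality_general
    {F : Type*} [DecidableEq F]
    (a : F → ℝ) (r : ℝ) (ha : ∀ i, 0 ≤ a i)
    (X : Finset F) (ℓ : F) (hℓ : ℓ ∈ X)
    (hinfeas : ∑ i ∈ X \ {ℓ}, a i < r) :
    ∀ S ⊆ X \ {ℓ}, ∑ i ∈ X \ S, resCon1 a r S i ≤ 2 * resReq1 a r S := by
  intro S hS
  rw [sdiff_singleton_eq_erase] at hS hinfeas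
  have hℓS : ℓ ∉ S := fun h => by simpa using hS h
  have hSr : ∑ i ∈ S, a i ≤ r :=
    (sum_le_sum_of_subset_of_nonneg hS fun i _ _ => ha i).trans hinfeas.le
  have hrest : ∑ i ∈ (X \ S).erase ℓ, resCon1 a r S i ≤ resReq1 a r S :=
    calc ∑ i ∈ (X \ S).erase ℓ, resCon1 a r S i
        = ∑ i ∈ X.erase ℓ \ S, resCon1 a r S i := by rw [erase_sdiff_comm]
      _ ≤ ∑ i ∈ X.erase ℓ \ S, a i := sum_sdiff_resCon1_le a r S _
      _ = ∑ i ∈ X.erase ℓ, a i - ∑ i ∈ S, a i := sum_sdiff_eq_sub hS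
      _ ≤ resReq1 a r S := by rw [resReq1_eq_sub_of_sum_le a r S hSr]; linarith
  rw [← add_sum_erase _ _ (mem_sdiff.2 ⟨hℓ, hℓS⟩)]
  linarith [resCon1_le_resReq1 a r S ℓ]

/-- Key inequality behind the Carnes–Shmoys min-cost knapsack analysis: if
removing some `ℓ ∈ X` makes `X` infeasible for the single user, then for every
`S ⊆ X \ {ℓ}` the residual contribution of `X` is at most twice the residual
requirement. -/
theorem carnes_shmoys_key_inequality
    {F : Type*} [Fintype F] [DecidableEq F]
    (a : F → ℝ) (r : ℝ) (ha : ∀ i, 0 ≤ a i)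
    (X : Finset F) (ℓ : F) (hℓ : ℓ ∈ X)
    (hinfeas : ∑ i ∈ X \ {ℓ}, a i < r) :
    ∀ S ⊆ X \ {ℓ}, ∑ i ∈ X \ S, resCon1 a r S i ≤ 2 * resReq1 a r S :=
  carnes_shmoys_key_inequality_general a r ha X ℓ hℓ hinfeas
end

section
/- 2-approximation guarantee of the primal-dual min-cost knapsack scheme, stated via its invariants (Theorem 3, Carnes–Shmoys): fix a single user j. Let X ⊆ F and let y = (y^S)_{S⊆F} with y^S ≥ 0 be individually dual feasible for j, and suppose (i) every facility i ∈ X is tight: Σ_{S⊆F, i∉S} a_{ij}^S · y^S = c_i, and (ii) for every S ⊆ F with y^S > 0, Σ_{i∈X\S} a_{ij}^S ≤ 2 · r_j^S. Then Σ_{i∈X} c_i ≤ 2 · Σ_{S⊆F} r_j^S · y^S. -/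
open Finset

/-!
Each facility of `X` is tight, so its cost is paid exactly by the duals `y^S` through its
residual contributions `a^S_i`. Exchanging the two sums, `∑_{i ∈ X} c_i` becomes
`∑_S y^S · ∑_{i ∈ X \ S} a^S_i`, and the second invariant bounds each inner sum by `2 r^S`
whenever `y^S` is nonzero.
-/

section

variable {F : Type*} [DecidableEq F] (a : F → ℝ) (r : ℝ)

theorem resCon1_eq_zero_of_mem {S : Finset F} {i : F} (hi : i ∈ S) : resCon1 a r S i = 0 :=
  if_pos hi

theorem sum_sdiff_resCon1 (X S : Finset F) :
    ∑ i ∈ X \ S, resCon1 a r S i = ∑ i ∈ X, resCon1 a r S i :=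
  sum_subset sdiff_subset fun _ hiX hiXS =>
    resCon1_eq_zero_of_mem a r (by simpa [hiX] using hiXS)

variable [Fintype F]

theorem sum_filter_not_mem_resCon1_mul (y : Finset F → ℝ) (i : F) :
    ∑ S ∈ univ.filter (fun S : Finset F => i ∉ S), resCon1 a r S i * y S
      = ∑ S : Finset F, resCon1 a r S i * y S :=
  sum_subset (filter_subset _ _) fun _ _ hS => by
    rw [resCon1_eq_zero_of_mem a r (by simpa using hS), zero_mul]

theorem sum_cost_eq_of_tight {c : F → ℝ} {X : Finset F} {y : Finset F → ℝ}
    (htight : ∀ i ∈ X,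
      ∑ S ∈ univ.filter (fun S : Finset F => i ∉ S), resCon1 a r S i * y S = c i) :
    ∑ i ∈ X, c i = ∑ S : Finset F, (∑ i ∈ X \ S, resCon1 a r S i) * y S :=
  calc ∑ i ∈ X, c i
      = ∑ i ∈ X, ∑ S : Finset F, resCon1 a r S i * y S :=
        sum_congr rfl fun i hi => by rw [← htight i hi, sum_filter_not_mem_resCon1_mul]
    _ = ∑ S : Finset F, ∑ i ∈ X, resCon1 a r S i * y S := sum_comm
    _ = ∑ S : Finset F, (∑ i ∈ X \ S, resCon1 a r S i) * y S := by
        simp only [sum_sdiff_resCon1, sum_mul]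

end

theorem carnes_shmoys_two_approx_general
    {F : Type*} [Fintype F] [DecidableEq F]
    (a : F → ℝ) (r : ℝ) (c : F → ℝ)
    (X : Finset F) (y : Finset F → ℝ) (hy : ∀ S, 0 ≤ y S)
    (htight : ∀ i ∈ X,
      ∑ S ∈ Finset.univ.filter (fun S : Finset F => i ∉ S), resCon1 a r S i * y S = c i)
    (hhalf : ∀ S : Finset F, 0 < y S → ∑ i ∈ X \ S, resCon1 a r S i ≤ 2 * resReq1 a r S) :
    ∑ i ∈ X, c i ≤ 2 * ∑ S : Finset F, resReq1 a r S * y S := by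
  rw [sum_cost_eq_of_tight a r htight, mul_sum]
  refine sum_le_sum fun S _ => ?_
  rcases (hy S).eq_or_lt with hzero | hpos
  · simp [← hzero]
  · calc (∑ i ∈ X \ S, resCon1 a r S i) * y S ≤ 2 * resReq1 a r S * y S := by
          gcongr
          exact hhalf S hpos
      _ = 2 * (resReq1 a r S * y S) := mul_assoc _ _ _

/-- 2-approximation guarantee of the primal-dual min-cost knapsack scheme,
stated via its invariants (Carnes–Shmoys): if every selected facility is
tight and every subset `S` with positive dual has residual contribution
at most `2 r^S`, then the cost of the selection is at most twice the dual
objective. -/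
theorem carnes_shmoys_two_approx
    {F : Type*} [Fintype F] [DecidableEq F]
    (a : F → ℝ) (r : ℝ) (c : F → ℝ)
    (ha : ∀ i, 0 ≤ a i) (hc : ∀ i, 0 ≤ c i)
    (X : Finset F) (y : Finset F → ℝ) (hy : ∀ S, 0 ≤ y S)
    (hfeas : ∀ i : F,
      ∑ S ∈ Finset.univ.filter (fun S : Finset F => i ∉ S), resCon1 a r S i * y S ≤ c i)
    (htight : ∀ i ∈ X,
      ∑ S ∈ Finset.univ.filter (fun S : Finset F => i ∉ S), resCon1 a r S i * y S = c i)
    (hhalf : ∀ S : Finset F, 0 < y S → ∑ i ∈ X \ S, resCon1 a r S i ≤ 2 * resReq1 a r S) :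
    ∑ i ∈ X, c i ≤ 2 * ∑ S : Finset F, resReq1 a r S * y S :=
  carnes_shmoys_two_approx_general a r c X y hy htight hhalf
end
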